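/- arXiv:1401.0247 — 2 statements merged into one kernel-verified Lean document; each statement's English description precedes it below -/
import Mathlib

section
/- Suppose the similarity ranking satisfies the (α,ν)-good neighborhood property, and let t = n_{C_i} for some cluster C_i. Then any two good points x, y ∈ G_i share at least t − 2(α+ν)n points among their t nearest neighbors: |N_t(x) ∩ N_t(y)| ≥ t − 2(α+ν)n. -/
/-!
Let `G_i = C_i \ B` and `t = |C_i|`. For a good point `x ∈ G_i`, its `|G_i|` nearest good
neighbours and its `t` nearest neighbours overall are both initial segments of the ranking by `x`,
so one contains the other. Either way at most `|B|` of the former are missing from the latter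
(when the good ones come first, `t - |G_i| = |C_i ∩ B|` are missing). Hence at most
`αn + |B| ≤ (α + ν)n` of the `t` nearest neighbours of `x` lie outside `G_i`. Since `|G_i| ≤ t`,
two such neighbourhoods of size `t` must overlap in at least `t - 2(α + ν)n` points.
-/

open Finset

/-- The `t` nearest neighbors of `x` in the whole point set:
all points whose rank (w.r.t. decreasing similarity to `x`) is below `t`. -/
def nearest {V : Type*} [Fintype V] [DecidableEq V] (r : V → V → ℕ) (x : V) (t : ℕ) :
    Finset V :=
  Finset.univ.filter fun y => r x y < t

/-- The `s` nearest neighbors of `x` within a subset `T`: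
the elements `y ∈ T` such that at most `s` elements of `T` have rank at most that of `y`. -/
def nearestIn {V : Type*} [Fintype V] [DecidableEq V] (r : V → V → ℕ) (x : V)
    (T : Finset V) (s : ℕ) : Finset V :=
  T.filter fun y => (T.filter fun z => r x z ≤ r x y).card ≤ s

/-- `B` witnesses the `(α,ν)`-good neighborhood property for the clustering `C`:
for every `i`, every `x ∈ G_i = C_i \ B` has at most `α·n` of its `|G_i|` nearest
neighbors within `G = S \ B` lying outside `G_i`. -/
def GoodCond {V : Type*} [Fintype V] [DecidableEq V] {k : ℕ} (r : V → V → ℕ)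
    (C : Fin k → Finset V) (α : ℝ) (B : Finset V) : Prop :=
  ∀ i : Fin k, ∀ x ∈ C i \ B,
    (((nearestIn r x (Finset.univ \ B) ((C i \ B).card)) \ (C i \ B)).card : ℝ)
      ≤ α * (Fintype.card V)

section Rank

variable {V β : Type*} [LinearOrder β]

/-- For `z ∈ T` and `f` injective on `T`, the position of `z` when `T` is listed by increasing
`f`, counting from `1`. By definition `nearestIn r x T s = {z ∈ T | rankWithin (r x) T z ≤ s}`. -/
def rankWithin (f : V → β) (T : Finset V) (z : V) : ℕ :=
  #{w ∈ T | f w ≤ f z}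

variable {f : V → β} {T : Finset V} {z w : V}

lemma rankWithin_le_rankWithin (h : f z ≤ f w) : rankWithin f T z ≤ rankWithin f T w :=
  card_le_card <| monotone_filter_right T fun _ _ hu => hu.trans h

lemma rankWithin_lt_rankWithin (hw : w ∈ T) (h : f z < f w) :
    rankWithin f T z < rankWithin f T w := by
  refine card_lt_card <| (ssubset_iff_of_subset <|
    monotone_filter_right T fun _ _ hu => hu.trans h.le).2 ⟨w, ?_, ?_⟩
  · exact mem_filter.2 ⟨hw, le_rfl⟩
  · simpa using fun _ => h

lemma one_le_rankWithin (hz : z ∈ T) : 1 ≤ rankWithin f T z :=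
  card_pos.2 ⟨z, mem_filter.2 ⟨hz, le_rfl⟩⟩

lemma rankWithin_le_card : rankWithin f T z ≤ #T :=
  card_filter_le _ _

lemma injOn_rankWithin (hf : Set.InjOn f T) : Set.InjOn (rankWithin f T) T := by
  intro z hz w hw h
  by_contra hne
  rcases lt_or_gt_of_ne (hf.ne hz hw hne) with hlt | hlt
  · exact (rankWithin_lt_rankWithin hw hlt).ne h
  · exact (rankWithin_lt_rankWithin hz hlt).ne' h

lemma image_rankWithin (hf : Set.InjOn f T) : T.image (rankWithin f T) = Icc 1 #T := by
  refine eq_of_subset_of_card_le (image_subset_iff.2 fun z hz =>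
    mem_Icc.2 ⟨one_le_rankWithin hz, rankWithin_le_card⟩) ?_
  rw [card_image_of_injOn (injOn_rankWithin hf), Nat.card_Icc, Nat.add_sub_cancel]

lemma card_filter_rankWithin_le {s : ℕ} (hf : Set.InjOn f T) (hs : s ≤ #T) :
    #{z ∈ T | rankWithin f T z ≤ s} = s := by
  have himage : {z ∈ T | rankWithin f T z ≤ s}.image (rankWithin f T) = Icc 1 s := by
    rw [← filter_image (p := (· ≤ s)), image_rankWithin hf]
    ext m
    simp only [mem_filter, mem_Icc]
    omega
  rw [← card_image_of_injOn ((injOn_rankWithin hf).mono (filter_subset _ _)), himage,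
    Nat.card_Icc, Nat.add_sub_cancel]

end Rank

section Neighbors

variable {V : Type*} [Fintype V] [DecidableEq V] {r : V → V → ℕ} {x : V}

lemma card_nearest {t : ℕ} (hinj : Function.Injective (r x))
    (hlt : ∀ y, r x y < Fintype.card V) (ht : t ≤ Fintype.card V) :
    #(nearest r x t) = t := by
  have himage : univ.image (r x) = range (Fintype.card V) :=
    eq_of_subset_of_card_le (image_subset_iff.2 fun y _ => mem_range.2 (hlt y))
      (by rw [card_range, card_image_of_injective _ hinj, card_univ])
  rw [← card_image_of_injective _ hinj, nearest, ← filter_image (p := (· < t)), himage]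
  have : {m ∈ range (Fintype.card V) | m < t} = range t := by
    ext m
    simp only [mem_filter, mem_range]
    omega
  rw [this, card_range]

lemma card_nearestIn {T : Finset V} {s : ℕ} (hinj : Set.InjOn (r x) T) (hs : s ≤ #T) :
    #(nearestIn r x T s) = s :=
  card_filter_rankWithin_le hinj hs

lemma nearestIn_subset_nearest_or_nearest_inter_subset (T : Finset V) (s t : ℕ) :
    nearestIn r x T s ⊆ nearest r x t ∨ nearest r x t ∩ T ⊆ nearestIn r x T s := by
  refine or_iff_not_imp_left.2 fun h => ?_
  obtain ⟨a, haA, haN⟩ := not_subset.1 h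
  obtain ⟨-, ha⟩ := mem_filter.1 haA
  intro w hw
  obtain ⟨hwN, hwT⟩ := mem_inter.1 hw
  have hwa : r x w ≤ r x a := by
    simp only [nearest, mem_filter, mem_univ, true_and] at hwN haN
    omega
  exact mem_filter.2 ⟨hwT, (rankWithin_le_rankWithin hwa).trans ha⟩

lemma card_nearest_sdiff_nearestIn_le (hinj : Function.Injective (r x))
    (hlt : ∀ y, r x y < Fintype.card V) (B C : Finset V) :
    #(nearest r x #C \ nearestIn r x (univ \ B) #(C \ B)) ≤ #B := by
  rcases nearestIn_subset_nearest_or_nearest_inter_subset (x := x) (univ \ B) #(C \ B) #C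
    with hsub | hsub
  · have hCB : #(C \ B) ≤ #(univ \ B) := card_le_card (sdiff_subset_sdiff (subset_univ C) le_rfl)
    rw [card_sdiff_of_subset hsub, card_nearest hinj hlt (card_le_univ C),
      card_nearestIn hinj.injOn hCB]
    have := le_card_sdiff B C
    omega
  · refine card_le_card fun z hz => ?_
    obtain ⟨hzN, hzA⟩ := mem_sdiff.1 hz
    by_contra hzB
    exact hzA (hsub (mem_inter.2 ⟨hzN, mem_sdiff.2 ⟨mem_univ z, hzB⟩⟩))

lemma card_nearest_sdiff_le {k : ℕ} {C : Fin k → Finset V} {α : ℝ} {B : Finset V}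
    (hinj : Function.Injective (r x)) (hlt : ∀ y, r x y < Fintype.card V)
    (hgood : GoodCond r C α B) {i : Fin k} (hx : x ∈ C i \ B) :
    (#(nearest r x #(C i) \ (C i \ B)) : ℝ) ≤ α * Fintype.card V + #B := by
  set N := nearest r x #(C i)
  set A := nearestIn r x (univ \ B) #(C i \ B)
  have hsplit : N \ (C i \ B) ⊆ A \ (C i \ B) ∪ N \ A := by
    intro z hz
    by_cases hzA : z ∈ A
    · exact mem_union_left _ (mem_sdiff.2 ⟨hzA, (mem_sdiff.1 hz).2⟩)
    · exact mem_union_right _ (mem_sdiff.2 ⟨(mem_sdiff.1 hz).1, hzA⟩)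
  have hcard : #(N \ (C i \ B)) ≤ #(A \ (C i \ B)) + #B :=
    (card_le_card hsplit).trans <| (card_union_le _ _).trans <|
      Nat.add_le_add_left (card_nearest_sdiff_nearestIn_le hinj hlt B (C i)) _
  have hA : (#(A \ (C i \ B)) : ℝ) ≤ α * Fintype.card V := hgood i x hx
  have hcardR : (#(N \ (C i \ B)) : ℝ) ≤ #(A \ (C i \ B)) + #B := by exact_mod_cast hcard
  linarith

end Neighbors

lemma Finset.card_add_card_le_card_inter_add_card_add_card_sdiff {α : Type*} [DecidableEq α]
    (X Y G : Finset α) : #X + #Y ≤ #(X ∩ Y) + #G + #(X \ G) + #(Y \ G) := by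
  have hsdiff := card_le_card_sdiff_add_card (s := X ∪ Y) (t := G)
  rw [union_sdiff_distrib] at hsdiff
  have := card_union_le (X \ G) (Y \ G)
  have := card_union_add_card_inter X Y
  omega

theorem good_points_same_cluster_share_neighbors_general
    {V : Type*} [Fintype V] [DecidableEq V] {k : ℕ}
    (r : V → V → ℕ) (C : Fin k → Finset V) (α ν : ℝ) (B : Finset V)
    (hrinj : ∀ x : V, Function.Injective (r x))
    (hrlt : ∀ x y : V, r x y < Fintype.card V)
    (hB : (B.card : ℝ) ≤ ν * (Fintype.card V))
    (hgood : GoodCond r C α B)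
    (i : Fin k) (t : ℕ) (ht : t = (C i).card)
    (x : V) (hx : x ∈ C i \ B) (y : V) (hy : y ∈ C i \ B) :
    (t : ℝ) - 2 * (α + ν) * (Fintype.card V)
        ≤ (((nearest r x t) ∩ (nearest r y t)).card : ℝ) := by
  subst ht
  have hx' := card_nearest_sdiff_le (hrinj x) (hrlt x) hgood hx
  have hy' := card_nearest_sdiff_le (hrinj y) (hrlt y) hgood hy
  have hoverlap := card_add_card_le_card_inter_add_card_add_card_sdiff
    (nearest r x #(C i)) (nearest r y #(C i)) (C i \ B)
  rw [card_nearest (hrinj x) (hrlt x) (card_le_univ _),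
    card_nearest (hrinj y) (hrlt y) (card_le_univ _)] at hoverlap
  have hG : (#(C i \ B) : ℝ) ≤ #(C i) := by exact_mod_cast card_le_card sdiff_subset
  have hoverlapR := (Nat.cast_le (α := ℝ)).2 hoverlap
  push_cast at hoverlapR
  linarith

theorem good_points_same_cluster_share_neighbors
    {V : Type*} [Fintype V] [DecidableEq V] {k : ℕ}
    (r : V → V → ℕ) (C : Fin k → Finset V) (α ν : ℝ) (B : Finset V)
    (hn : 0 < Fintype.card V)
    (hα : 0 ≤ α) (hν : 0 ≤ ν)
    (hrinj : ∀ x : V, Function.Injective (r x))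
    (hrlt : ∀ x y : V, r x y < Fintype.card V)
    (hdis : ∀ i j : Fin k, i ≠ j → Disjoint (C i) (C j))
    (hcov : ∀ x : V, ∃ i : Fin k, x ∈ C i)
    (hB : (B.card : ℝ) ≤ ν * (Fintype.card V))
    (hgood : GoodCond r C α B)
    (i : Fin k) (t : ℕ) (ht : t = (C i).card)
    (x : V) (hx : x ∈ C i \ B) (y : V) (hy : y ∈ C i \ B) :
    (t : ℝ) - 2 * (α + ν) * (Fintype.card V)
        ≤ (((nearest r x t) ∩ (nearest r y t)).card : ℝ) :=
  good_points_same_cluster_share_neighbors_general r C α ν B hrinj hrlt hB hgood i t ht x hx y hy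
end

section
/- Let α, ν ≥ 0 be reals and B ⊆ S with |B| ≤ νn. Suppose j ≠ i, n_{C_j} > 6(α+ν)n, and t is an integer with 6(α+ν)n < t ≤ n_{C_i} (and t ≤ n). Let x be a good point of C_i, let y be a good point of C_j, and let z ∈ B. If |N_t(x) ∩ N_t(z)| ≥ t − 2(α+ν)n, then |N_t(y) ∩ N_t(z)| < t − 2(α+ν)n; that is, the bad point z cannot share at least t − 2(α+ν)n of its t nearest neighbors with both x and y. -/
open Finset

/-- In the weak good neighborhood setting, `x` is a good point of the cluster `Ci`
(w.r.t. the bad set `B`): `x ∈ Ci \ B` and at most `α·n` of its `|Ci \ B|` nearest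
neighbors within `S \ B` lie outside `Ci \ B`. -/
def IsGoodPoint {V : Type*} [Fintype V] [DecidableEq V] (r : V → V → ℕ)
    (α : ℝ) (B Ci : Finset V) (x : V) : Prop :=
  x ∈ Ci \ B ∧
    (((nearestIn r x (Finset.univ \ B) ((Ci \ B).card)) \ (Ci \ B)).card : ℝ)
      ≤ α * (Fintype.card V)

section Helpers

set_option linter.unusedSectionVars false

variable {V : Type*} [Fintype V] [DecidableEq V]

lemma nearest_card (r : V → V → ℕ) (x : V) (t : ℕ)
    (hinj : Function.Injective (r x)) (hlt : ∀ y, r x y < Fintype.card V)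
    (ht : t ≤ Fintype.card V) : (nearest r x t).card = t := by
  have hbij : Function.Bijective (fun v => (⟨r x v, hlt v⟩ : Fin (Fintype.card V))) := by
    rw [Fintype.bijective_iff_injective_and_card]
    exact ⟨fun a b hab => hinj (by simpa using congrArg Fin.val hab), by simp⟩
  have himg : (nearest r x t).image (r x) = Finset.range t := by
    ext m
    simp only [mem_image, mem_range, nearest, mem_filter, mem_univ, true_and]
    constructor
    · rintro ⟨v, hv, rfl⟩; exact hv
    · intro hm
      obtain ⟨v, hv⟩ := hbij.2 ⟨m, lt_of_lt_of_le hm ht⟩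
      have hveq : r x v = m := by simpa using congrArg Fin.val hv
      exact ⟨v, by omega, hveq⟩
  have := Finset.card_image_of_injective (nearest r x t) hinj
  rw [himg, Finset.card_range] at this
  omega

/-- If `A` is a downward-closed (w.r.t. rank) subset of `T`, then at most
`A.card - s` of its elements fall outside the `s` nearest of `x` within `T`. -/
lemma sdiff_nearestIn_card_le (r : V → V → ℕ) (x : V) (T A : Finset V)
    (hinj : Function.Injective (r x)) (hA : A ⊆ T)
    (hdown : ∀ w ∈ A, ∀ v ∈ T, r x v ≤ r x w → v ∈ A) (s : ℕ) :
    (A \ nearestIn r x T s).card ≤ A.card - s := by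
  set ρ : V → ℕ := fun w => (T.filter fun z => r x z ≤ r x w).card with hρ
  have hmaps : ∀ w ∈ A \ nearestIn r x T s, ρ w ∈ Finset.Ioc s A.card := by
    intro w hw
    rw [mem_sdiff] at hw
    obtain ⟨hwA, hwP⟩ := hw
    rw [Finset.mem_Ioc]
    constructor
    · by_contra hle
      exact hwP (by simp only [nearestIn, mem_filter]; exact ⟨hA hwA, not_lt.mp hle⟩)
    · apply Finset.card_le_card
      intro v hv
      rw [mem_filter] at hv
      exact hdown w hwA v hv.1 hv.2
  have hinjOn : Set.InjOn ρ ((A \ nearestIn r x T s : Finset V) : Set V) := by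
    intro w1 h1 w2 h2 heq
    by_contra hne
    have hr : r x w1 ≠ r x w2 := fun h => hne (hinj h)
    rw [Finset.mem_coe, mem_sdiff] at h1 h2
    rcases lt_or_gt_of_ne hr with hlt | hlt
    · have : ρ w1 < ρ w2 := by
        apply Finset.card_lt_card
        constructor
        · intro v hv; rw [mem_filter] at hv ⊢; exact ⟨hv.1, by omega⟩
        · intro hsub
          have := hsub (by rw [mem_filter]; exact ⟨hA h2.1, le_refl _⟩)
          rw [mem_filter] at this; omega
      omega
    · have : ρ w2 < ρ w1 := by
        apply Finset.card_lt_card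
        constructor
        · intro v hv; rw [mem_filter] at hv ⊢; exact ⟨hv.1, by omega⟩
        · intro hsub
          have := hsub (by rw [mem_filter]; exact ⟨hA h1.1, le_refl _⟩)
          rw [mem_filter] at this; omega
      omega
  calc (A \ nearestIn r x T s).card ≤ (Finset.Ioc s A.card).card :=
        Finset.card_le_card_of_injOn ρ hmaps hinjOn
    _ = A.card - s := Nat.card_Ioc s A.card

lemma inter_card_le (U W Cc : Finset V) : (U ∩ W).card ≤ (W ∩ Cc).card + (U \ Cc).card := by
  have h1 : ((U ∩ W) ∩ Cc).card + ((U ∩ W) \ Cc).card = (U ∩ W).card :=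
    Finset.card_inter_add_card_sdiff _ _
  have h2 : (U ∩ W) ∩ Cc ⊆ W ∩ Cc := by
    intro v hv; simp only [mem_inter] at hv ⊢; exact ⟨hv.1.2, hv.2⟩
  have h3 : (U ∩ W) \ Cc ⊆ U \ Cc := by
    intro v hv; simp only [mem_sdiff, mem_inter] at hv ⊢; exact ⟨hv.1.1, hv.2⟩
  have := Finset.card_le_card h2
  have := Finset.card_le_card h3
  omega

/-- Lemma A: for a good point `x` of `Ci` with `t ≤ |Ci|`, few of its `t` nearest
neighbors lie outside `Ci`. -/
lemma good_sdiff_card (r : V → V → ℕ) (B Ci : Finset V) (x : V) (t : ℕ)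
    (hinj : Function.Injective (r x)) (hlt : ∀ y, r x y < Fintype.card V)
    (htn : t ≤ Fintype.card V) (hti : t ≤ Ci.card) :
    (nearest r x t \ Ci).card ≤ B.card +
      ((nearestIn r x (Finset.univ \ B) ((Ci \ B).card)) \ (Ci \ B)).card := by
  set G := nearest r x t with hG
  set P := nearestIn r x (Finset.univ \ B) ((Ci \ B).card) with hP
  have hsub : G \ Ci ⊆ (G ∩ B) ∪ ((G \ B) \ P) ∪ (P \ (Ci \ B)) := by
    intro w hw
    rw [mem_sdiff] at hw
    simp only [mem_union, mem_inter, mem_sdiff]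
    by_cases hwB : w ∈ B
    · exact Or.inl (Or.inl ⟨hw.1, hwB⟩)
    · by_cases hwP : w ∈ P
      · refine Or.inr ⟨hwP, ?_⟩
        intro h
        exact hw.2 h.1
      · exact Or.inl (Or.inr ⟨⟨hw.1, hwB⟩, hwP⟩)
  have hAP : ((G \ B) \ P).card ≤ (G \ B).card - (Ci \ B).card := by
    apply sdiff_nearestIn_card_le r x (Finset.univ \ B) (G \ B) hinj
    · intro v hv
      rw [mem_sdiff] at hv ⊢
      exact ⟨mem_univ v, hv.2⟩
    · intro w hw v hv hrv
      rw [mem_sdiff] at hw hv ⊢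
      have hwG : r x w < t := by
        have := hw.1; rw [hG, nearest, mem_filter] at this; exact this.2
      refine ⟨?_, hv.2⟩
      rw [hG, nearest, mem_filter]
      exact ⟨mem_univ v, by omega⟩
  have hGcard : G.card = t := nearest_card r x t hinj hlt htn
  have h1 : (G \ B).card + (G ∩ B).card = G.card := Finset.card_sdiff_add_card_inter _ _
  have h2 : (Ci \ B).card + (Ci ∩ B).card = Ci.card := Finset.card_sdiff_add_card_inter _ _
  have h3 : (Ci ∩ B).card ≤ B.card := Finset.card_le_card (Finset.inter_subset_right)
  have h4 : (G ∩ B).card ≤ B.card := Finset.card_le_card (Finset.inter_subset_right)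
  have h5 : (G \ Ci).card ≤ (G ∩ B).card + ((G \ B) \ P).card + (P \ (Ci \ B)).card := by
    calc (G \ Ci).card ≤ ((G ∩ B) ∪ ((G \ B) \ P) ∪ (P \ (Ci \ B))).card :=
          Finset.card_le_card hsub
      _ ≤ ((G ∩ B) ∪ ((G \ B) \ P)).card + (P \ (Ci \ B)).card := Finset.card_union_le _ _
      _ ≤ (G ∩ B).card + ((G \ B) \ P).card + (P \ (Ci \ B)).card := by
          have := Finset.card_union_le (G ∩ B) ((G \ B) \ P); omega
  omega

/-- Lemma B: for a good point `y` of `Cj`, many of its `t` nearest neighbors lie in `Cj`. -/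
lemma good_inter_card (r : V → V → ℕ) (B Cj : Finset V) (y : V) (t : ℕ)
    (hinj : Function.Injective (r y)) (hlt : ∀ w, r y w < Fintype.card V)
    (htn : t ≤ Fintype.card V) :
    min t Cj.card ≤ (nearest r y t ∩ Cj).card + B.card +
      ((nearestIn r y (Finset.univ \ B) ((Cj \ B).card)) \ (Cj \ B)).card := by
  set G := nearest r y t with hG
  set P := nearestIn r y (Finset.univ \ B) ((Cj \ B).card) with hP
  set A := G \ B with hA
  have hAP : (A \ P).card ≤ A.card - (Cj \ B).card := by
    apply sdiff_nearestIn_card_le r y (Finset.univ \ B) A hinj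
    · intro v hv; rw [hA, mem_sdiff] at hv; rw [mem_sdiff]; exact ⟨mem_univ v, hv.2⟩
    · intro w hw v hv hrv
      rw [hA, mem_sdiff] at hw ⊢
      rw [mem_sdiff] at hv
      have hwG : r y w < t := by
        have := hw.1; rw [hG, nearest, mem_filter] at this; exact this.2
      refine ⟨?_, hv.2⟩
      rw [hG, nearest, mem_filter]
      exact ⟨mem_univ v, by omega⟩
  have h0 : (A ∩ P).card + (A \ P).card = A.card := by
    have := Finset.card_inter_add_card_sdiff A P; omega
  have h1 : A.card + (G ∩ B).card = G.card := Finset.card_sdiff_add_card_inter _ _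
  have hGcard : G.card = t := nearest_card r y t hinj hlt htn
  have h2 : (Cj \ B).card + (Cj ∩ B).card = Cj.card := Finset.card_sdiff_add_card_inter _ _
  have h3 : (Cj ∩ B).card ≤ B.card := Finset.card_le_card (Finset.inter_subset_right)
  have h4 : (G ∩ B).card ≤ B.card := Finset.card_le_card (Finset.inter_subset_right)
  -- A ∩ P splits into part in Cj\B (⊆ G ∩ Cj) and part outside (⊆ P \ (Cj\B))
  have h5 : (A ∩ P).card ≤ (G ∩ Cj).card + (P \ (Cj \ B)).card := by
    have e1 : ((A ∩ P) ∩ (Cj \ B)).card + ((A ∩ P) \ (Cj \ B)).card = (A ∩ P).card :=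
      Finset.card_inter_add_card_sdiff _ _
    have e2 : (A ∩ P) ∩ (Cj \ B) ⊆ G ∩ Cj := by
      intro v hv
      simp only [mem_inter, mem_sdiff, hA] at hv ⊢
      exact ⟨hv.1.1.1, hv.2.1⟩
    have e3 : (A ∩ P) \ (Cj \ B) ⊆ P \ (Cj \ B) := by
      intro v hv
      simp only [mem_sdiff, mem_inter] at hv ⊢
      exact ⟨hv.1.2, hv.2⟩
    have := Finset.card_le_card e2
    have := Finset.card_le_card e3
    omega
  omega

end Helpers

theorem weak_bad_point_not_shared_between_clusters
    {V : Type*} [Fintype V] [DecidableEq V] {k : ℕ}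
    (r : V → V → ℕ) (C : Fin k → Finset V) (α ν : ℝ) (B : Finset V)
    (hn : 0 < Fintype.card V)
    (hα : 0 ≤ α) (hν : 0 ≤ ν)
    (hrinj : ∀ x : V, Function.Injective (r x))
    (hrlt : ∀ x y : V, r x y < Fintype.card V)
    (hdis : ∀ i j : Fin k, i ≠ j → Disjoint (C i) (C j))
    (hcov : ∀ x : V, ∃ i : Fin k, x ∈ C i)
    (hB : (B.card : ℝ) ≤ ν * (Fintype.card V))
    (i j : Fin k) (hij : j ≠ i)
    (hCj : 6 * (α + ν) * (Fintype.card V) < ((C j).card : ℝ))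
    (t : ℕ) (htlo : 6 * (α + ν) * (Fintype.card V) < (t : ℝ))
    (hthi : t ≤ (C i).card) (htn : t ≤ Fintype.card V)
    (x : V) (hx : IsGoodPoint r α B (C i) x)
    (y : V) (hy : IsGoodPoint r α B (C j) y)
    (z : V) (hz : z ∈ B)
    (hxz : (t : ℝ) - 2 * (α + ν) * (Fintype.card V)
        ≤ (((nearest r x t) ∩ (nearest r z t)).card : ℝ)) :
    (((nearest r y t) ∩ (nearest r z t)).card : ℝ)
        < (t : ℝ) - 2 * (α + ν) * (Fintype.card V) := by
  by_contra hcon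
  push_neg at hcon
  -- natural number counting facts
  have hGz : (nearest r z t).card = t := nearest_card r z t (hrinj z) (hrlt z) htn
  have F1 : ((nearest r x t) ∩ (nearest r z t)).card ≤
      ((nearest r z t) ∩ C i).card + ((nearest r x t) \ C i).card :=
    inter_card_le _ _ _
  have F2 : ((nearest r z t) ∩ C i).card + ((nearest r z t) \ C i).card = t := by
    have := Finset.card_inter_add_card_sdiff (nearest r z t) (C i); omega
  have F3 : ((nearest r y t) ∩ (nearest r z t)).card ≤
      ((nearest r y t) ∩ C i).card + ((nearest r z t) \ C i).card := by
    have := inter_card_le (nearest r z t) (nearest r y t) (C i)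
    rwa [Finset.inter_comm] at this
  have F4 : ((nearest r y t) ∩ C i).card + ((nearest r y t) ∩ C j).card ≤ t := by
    have hd : Disjoint ((nearest r y t) ∩ C i) ((nearest r y t) ∩ C j) := by
      apply Finset.disjoint_left.mpr
      intro a ha hb
      exact Finset.disjoint_left.mp (hdis j i hij) (Finset.mem_inter.mp hb).2
        (Finset.mem_inter.mp ha).2
    have hsub : ((nearest r y t) ∩ C i) ∪ ((nearest r y t) ∩ C j) ⊆ nearest r y t := by
      intro a ha
      rcases Finset.mem_union.mp ha with h | h
      · exact (Finset.mem_inter.mp h).1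
      · exact (Finset.mem_inter.mp h).1
    have hGy : (nearest r y t).card = t := nearest_card r y t (hrinj y) (hrlt y) htn
    calc ((nearest r y t) ∩ C i).card + ((nearest r y t) ∩ C j).card
        = (((nearest r y t) ∩ C i) ∪ ((nearest r y t) ∩ C j)).card :=
          (Finset.card_union_of_disjoint hd).symm
      _ ≤ (nearest r y t).card := Finset.card_le_card hsub
      _ = t := hGy
  -- Lemma A for x, Lemma B for y
  have hA := good_sdiff_card r B (C i) x t (hrinj x) (hrlt x) htn hthi
  have hBy := good_inter_card r B (C j) y t (hrinj y) (hrlt y) htn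
  -- move to the reals
  set n : ℝ := (Fintype.card V : ℝ) with hnn
  have hA' : ((nearest r x t \ C i).card : ℝ) ≤ ν * n + α * n := by
    have h2 := hx.2
    have : ((nearest r x t \ C i).card : ℝ) ≤ (B.card : ℝ) +
        (((nearestIn r x (Finset.univ \ B) ((C i \ B).card)) \ (C i \ B)).card : ℝ) := by
      exact_mod_cast hA
    linarith
  have hmin : 6 * (α + ν) * n < ((min t (C j).card : ℕ) : ℝ) := by
    rw [Nat.cast_min]
    exact lt_min htlo hCj
  have hBy' : ((min t (C j).card : ℕ) : ℝ) ≤ ((nearest r y t ∩ C j).card : ℝ) +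
      (B.card : ℝ) +
      (((nearestIn r y (Finset.univ \ B) ((C j \ B).card)) \ (C j \ B)).card : ℝ) := by
    exact_mod_cast hBy
  have hyj : 5 * (α + ν) * n < ((nearest r y t ∩ C j).card : ℝ) := by
    have h2 := hy.2
    rw [← hnn] at h2
    linarith
  have F1' : (((nearest r x t) ∩ (nearest r z t)).card : ℝ) ≤
      (((nearest r z t) ∩ C i).card : ℝ) + (((nearest r x t) \ C i).card : ℝ) := by
    exact_mod_cast F1
  have F2' : (((nearest r z t) ∩ C i).card : ℝ) + (((nearest r z t) \ C i).card : ℝ)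
      = (t : ℝ) := by exact_mod_cast F2
  have F3' : (((nearest r y t) ∩ (nearest r z t)).card : ℝ) ≤
      (((nearest r y t) ∩ C i).card : ℝ) + (((nearest r z t) \ C i).card : ℝ) := by
    exact_mod_cast F3
  have F4' : (((nearest r y t) ∩ C i).card : ℝ) + (((nearest r y t) ∩ C j).card : ℝ)
      ≤ (t : ℝ) := by exact_mod_cast F4
  linarith
end
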